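/- arXiv:1911.11494 — 3 statements merged into one kernel-verified Lean document; each statement's English description precedes it below -/
import Mathlib

section
/- Let S = (V, E⁺ ∪ E⁻) be a finite complete signed graph with a valid distance drawing D in a metric space (T,d), and define r_v = d(D(v),D(v⁺))/2 as above. Then for all distinct u,v ∈ V with {u,v} ∈ E⁻, one has d(D(u),D(v)) > r_u + r_v; in particular the closed balls B(D(u),r_u) and B(D(v),r_v) are disjoint. -/
/-- `D` is a valid distance drawing of the complete signed graph whose
positive subgraph is `P` (negative edges are the non-adjacent distinct pairs). -/
def ValidDrawing {V T : Type*} [MetricSpace T] (P : SimpleGraph V) (D : V → T) : Prop :=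
  Function.Injective D ∧
    ∀ u v w : V, P.Adj u v → u ≠ w → ¬ P.Adj u w →
      dist (D u) (D v) < dist (D u) (D w)

/-- `p v` is a farthest positive neighbor of `v` in `N⁺[v]` under `D`. -/
def FarthestFriend {V T : Type*} [MetricSpace T] (P : SimpleGraph V) (D : V → T)
    (p : V → V) : Prop :=
  ∀ v : V, (p v = v ∨ P.Adj v (p v)) ∧
    ∀ w : V, (w = v ∨ P.Adj v w) → dist (D v) (D w) ≤ dist (D v) (D (p v))

theorem ValidDrawing.dist_lt_of_not_adj {V T : Type*} [MetricSpace T] {P : SimpleGraph V}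
    {D : V → T} (hD : ValidDrawing P D) {u v w : V} (hv : v = u ∨ P.Adj u v) (huw : u ≠ w)
    (hw : ¬ P.Adj u w) : dist (D u) (D v) < dist (D u) (D w) := by
  rcases hv with rfl | hv
  · simpa using hD.1.ne huw
  · exact hD.2 u v w hv huw hw

theorem stmt_5_general {V T : Type*} [MetricSpace T]
    (P : SimpleGraph V) (D : V → T) (p : V → V)
    (hD : ValidDrawing P D) (hp : FarthestFriend P D p) :
    ∀ u v : V, u ≠ v → ¬ P.Adj u v →
      dist (D u) (D v) > dist (D u) (D (p u)) / 2 + dist (D v) (D (p v)) / 2 ∧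
      Metric.closedBall (D u) (dist (D u) (D (p u)) / 2) ∩
        Metric.closedBall (D v) (dist (D v) (D (p v)) / 2) = ∅ := by
  intro u v huv hneg
  have hu := hD.dist_lt_of_not_adj (hp u).1 huv hneg
  have hv := hD.dist_lt_of_not_adj (hp v).1 huv.symm (fun h => hneg h.symm)
  rw [dist_comm (D v) (D u)] at hv
  have hsum : dist (D u) (D (p u)) / 2 + dist (D v) (D (p v)) / 2 < dist (D u) (D v) := by
    linarith
  exact ⟨hsum, Set.disjoint_iff_inter_eq_empty.mp (Metric.closedBall_disjoint_closedBall hsum)⟩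

theorem stmt_5 {V T : Type*} [Fintype V] [MetricSpace T]
    (P : SimpleGraph V) (D : V → T) (p : V → V)
    (hD : ValidDrawing P D) (hp : FarthestFriend P D p) :
    ∀ u v : V, u ≠ v → ¬ P.Adj u v →
      dist (D u) (D v) > dist (D u) (D (p u)) / 2 + dist (D v) (D (p v)) / 2 ∧
      Metric.closedBall (D u) (dist (D u) (D (p u)) / 2) ∩
        Metric.closedBall (D v) (dist (D v) (D (p v)) / 2) = ∅ :=
  stmt_5_general P D p hD hp
end

section
/- A finite complete signed graph S has a valid distance drawing in a geodesic metric space (T,d) in which its positive subgraph S⁺ admits a unit-ball intersection model if and only if S⁺ admits a family of closed balls in some metric space whose pairwise intersection pattern equals the edge relation of S⁺. Concretely: if there exist points c_v ∈ T (injective in v) with {u,v} ∈ E⁺ ⟺ d(c_u,c_v) ≤ 2 for distinct u,v, then D(v) = c_v is a valid distance drawing of S; conversely, if D is a valid distance drawing of S in a metric space (T,d), then with r_v = d(D(v),D(v⁺))/2, for all distinct u,v: {u,v} ∈ E⁺ ⟺ d(D(u),D(v)) ≤ r_u + r_v. -/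
/-- A metric space is geodesic if any two points `x, y` are joined by an
isometric embedding of the interval `[0, dist x y]`. -/
def IsGeodesicSpace (X : Type*) [MetricSpace X] : Prop :=
  ∀ x y : X, ∃ γ : ℝ → X, γ 0 = x ∧ γ (dist x y) = y ∧
    ∀ s ∈ Set.Icc (0 : ℝ) (dist x y), ∀ t ∈ Set.Icc (0 : ℝ) (dist x y),
      dist (γ s) (γ t) = |s - t|

/-!
A positive edge `uv` is no longer than either endpoint's farthest positive neighbour, so
`d(u,v) ≤ r_u + r_v` with `r_w = d(D w, D w⁺) / 2`. For a negative pair, validity makes `d(u,v)`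
strictly exceed both `2 r_u` and `2 r_v` (when `u⁺ = u` this is injectivity), hence their mean.
-/

namespace ValidDrawing

variable {V T : Type*} [MetricSpace T] {P : SimpleGraph V}

theorem of_adj_iff_dist_le {c : V → T} (hc : Function.Injective c) (r : ℝ)
    (hadj : ∀ u v : V, u ≠ v → (P.Adj u v ↔ dist (c u) (c v) ≤ r)) : ValidDrawing P c := by
  refine ⟨hc, fun u v w huv huw hnuw => ?_⟩
  have hv : dist (c u) (c v) ≤ r := (hadj u v huv.ne).mp huv
  have hw : r < dist (c u) (c w) := not_le.mp fun h => hnuw ((hadj u w huw).mpr h)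
  exact hv.trans_lt hw

variable {D : V → T} {p : V → V}

theorem dist_farthest_lt_of_not_adj (hD : ValidDrawing P D) (hp : FarthestFriend P D p)
    {u v : V} (huv : u ≠ v) (hnadj : ¬ P.Adj u v) :
    dist (D u) (D (p u)) < dist (D u) (D v) := by
  rcases (hp u).1 with hpu | hpu
  · rw [hpu, dist_self]
    exact dist_pos.mpr (hD.1.ne huv)
  · exact hD.2 u (p u) v hpu huv hnadj

end ValidDrawing

theorem FarthestFriend.dist_le_of_adj {V T : Type*} [MetricSpace T] {P : SimpleGraph V}
    {D : V → T} {p : V → V} (hp : FarthestFriend P D p) {u v : V} (huv : P.Adj u v) :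
    dist (D u) (D v) ≤ dist (D u) (D (p u)) :=
  (hp u).2 v (Or.inr huv)

theorem stmt_9_general {V : Type*} (P : SimpleGraph V) :
    (∀ (T : Type) (_ : MetricSpace T), IsGeodesicSpace T →
      ∀ c : V → T, Function.Injective c →
        (∀ u v : V, u ≠ v → (P.Adj u v ↔ dist (c u) (c v) ≤ 2)) →
        ValidDrawing P c) ∧
    (∀ (T : Type) (_ : MetricSpace T) (D : V → T) (p : V → V),
      ValidDrawing P D → FarthestFriend P D p →
      ∀ u v : V, u ≠ v →
        (P.Adj u v ↔
          dist (D u) (D v) ≤ dist (D u) (D (p u)) / 2 + dist (D v) (D (p v)) / 2)) := by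
  refine ⟨fun T _ _ c hc hadj => ValidDrawing.of_adj_iff_dist_le hc 2 hadj,
    fun T _ D p hD hp u v huv => ⟨fun hadj => ?_, fun hle => ?_⟩⟩
  · have hu := hp.dist_le_of_adj hadj
    have hv := hp.dist_le_of_adj hadj.symm
    rw [dist_comm (D v) (D u)] at hv
    linarith
  · by_contra hnadj
    have hu := hD.dist_farthest_lt_of_not_adj hp huv hnadj
    have hv := hD.dist_farthest_lt_of_not_adj hp huv.symm (mt P.adj_symm hnadj)
    rw [dist_comm (D v) (D u)] at hv
    linarith

theorem stmt_9 {V : Type*} [Fintype V] (P : SimpleGraph V) :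
    (∀ (T : Type) (_ : MetricSpace T), IsGeodesicSpace T →
      ∀ c : V → T, Function.Injective c →
        (∀ u v : V, u ≠ v → (P.Adj u v ↔ dist (c u) (c v) ≤ 2)) →
        ValidDrawing P c) ∧
    (∀ (T : Type) (_ : MetricSpace T) (D : V → T) (p : V → V),
      ValidDrawing P D → FarthestFriend P D p →
      ∀ u v : V, u ≠ v →
        (P.Adj u v ↔
          dist (D u) (D v) ≤ dist (D u) (D (p u)) / 2 + dist (D v) (D (p v)) / 2)) :=
  stmt_9_general P
end

section
/- Let T be a finite tree with the shortest-path metric and suppose a finite graph G is the intersection graph of integer-radius balls {B(c_v, r_v)}_{v ∈ V} in T. Then G is also the intersection graph of a family of equal-radius balls in a (possibly larger) tree: there exists a tree T' containing T as an isometrically embedded subgraph, centers c'_v in T', and a common radius R, such that for distinct u,v: B(c'_u, R) ∩ B(c'_v, R) ≠ ∅ in T' if and only if B(c_u, r_u) ∩ B(c_v, r_v) ≠ ∅ in T. -/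
/-!
Attach to every vertex `a` of `T` a pendant path `(a, 0) - (a, 1) - ⋯ - (a, R)` of length
`R = diam T` and put `c'_v` at height `R - r_v` on the path hanging at `c_v`. The resulting comb
is a tree whose layer `0` is an isometric copy of `T`, and a shortest walk between different teeth
`a ≠ b` must go down to the base and up again, so `d((a, i), (b, j)) = i + d(a, b) + j`. In a
connected graph two balls meet iff the distance of their centres is at most the sum of the radii,
so the balls of radius `R` about `c'_u, c'_v` meet iff `d(c_u, c_v) ≤ r_u + r_v`. Radii beyond the
diameter (where `R - r_v` truncates to `0`) do not matter, since both conditions then hold.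
-/

/-- The closed ball of radius `r` around `c` in the shortest-path metric of a graph `T`. -/
def graphBall {W : Type*} (T : SimpleGraph W) (c : W) (r : ℕ) : Set W :=
  {w : W | T.dist c w ≤ r}

namespace SimpleGraph

variable {α β : Type*} {G : SimpleGraph α} {H : SimpleGraph β} {u v : α}

lemma Reachable.iff_of_forall_adj_iff {P : α → Prop} (hP : ∀ ⦃x y⦄, G.Adj x y → (P x ↔ P y))
    (h : G.Reachable u v) : P u ↔ P v := by
  obtain ⟨p⟩ := h
  induction p with
  | nil => rfl
  | cons hxy _ ih => exact (hP hxy).trans ih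

lemma Reachable.le_add_dist {f : α → ℕ} (hf : ∀ ⦃x y⦄, G.Adj x y → f y ≤ f x + 1)
    (h : G.Reachable u v) : f v ≤ f u + G.dist u v := by
  obtain ⟨p, hp⟩ := h.exists_walk_length_eq_dist
  rw [← hp]
  clear hp h
  induction p with
  | nil => simp
  | cons hxy _ ih =>
    rw [Walk.length_cons]
    have := hf hxy
    omega

lemma Reachable.dist_map_le (f : G →g H) (h : G.Reachable u v) :
    H.dist (f u) (f v) ≤ G.dist u v := by
  obtain ⟨p, hp⟩ := h.exists_walk_length_eq_dist
  simpa [hp] using H.dist_le (p.map f)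

lemma Iso.dist_eq (f : G ≃g H) (u v : α) : H.dist (f u) (f v) = G.dist u v := by
  by_cases h : G.Reachable u v
  · refine le_antisymm (h.dist_map_le f.toHom) ?_
    simpa using (Iso.reachable_iff (φ := f) |>.mpr h).dist_map_le f.symm.toHom
  · rw [dist_eq_zero_of_not_reachable h,
      dist_eq_zero_of_not_reachable (Iso.reachable_iff.not.mpr h)]

lemma Connected.exists_dist_le_of_le_dist (hG : G.Connected) {k : ℕ} (hk : k ≤ G.dist u v) :
    ∃ w, G.dist u w ≤ k ∧ G.dist w v ≤ G.dist u v - k := by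
  obtain ⟨p, hp⟩ := hG.exists_walk_length_eq_dist u v
  refine ⟨p.getVert k, ?_, ?_⟩
  · simpa [Walk.take_length, hp, hk] using G.dist_le (p.take k)
  · simpa [Walk.drop_length, hp] using G.dist_le (p.drop k)

lemma Connected.graphBall_inter_nonempty_iff (hG : G.Connected) {x y : α} {r s : ℕ} :
    (graphBall G x r ∩ graphBall G y s).Nonempty ↔ G.dist x y ≤ r + s := by
  simp only [graphBall, Set.Nonempty, Set.mem_inter_iff, Set.mem_ofPred_eq]
  constructor
  · rintro ⟨w, hxw, hyw⟩
    have := hG.dist_triangle (u := x) (v := w) (w := y)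
    rw [dist_comm (u := w)] at this
    omega
  · intro h
    obtain ⟨w, hxw, hwy⟩ := hG.exists_dist_le_of_le_dist (min_le_right r (G.dist x y))
    refine ⟨w, hxw.trans (min_le_left _ _), ?_⟩
    rw [dist_comm]
    omega

lemma isBridge_of_forall_adj_iff (P : α → Prop) {x y : α}
    (hP : ∀ ⦃u v⦄, G.Adj u v → s(u, v) ≠ s(x, y) → (P u ↔ P v)) (hx : P x) (hy : ¬P y) :
    G.IsBridge s(x, y) := by
  rw [isBridge_iff]
  refine fun h ↦ hy ((h.iff_of_forall_adj_iff fun u v huv ↦ ?_).mp hx)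
  rw [deleteEdges_adj, Set.mem_singleton_iff] at huv
  exact hP huv.1 huv.2

def comb (G : SimpleGraph α) (n : ℕ) : SimpleGraph (α × Fin (n + 1)) where
  Adj x y := (x.2 = 0 ∧ y.2 = 0 ∧ G.Adj x.1 y.1) ∨ (x.1 = y.1 ∧ (pathGraph (n + 1)).Adj x.2 y.2)
  symm := ⟨by
    rintro x y (⟨hx, hy, h⟩ | ⟨h, h'⟩)
    exacts [Or.inl ⟨hy, hx, h.symm⟩, Or.inr ⟨h.symm, h'.symm⟩]⟩
  loopless := ⟨by rintro x (⟨-, -, h⟩ | ⟨-, h⟩) <;> exact h.ne rfl⟩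

variable {n : ℕ}

def combBase : G →g comb G n where
  toFun a := (a, 0)
  map_rel' h := Or.inl ⟨rfl, rfl, h⟩

lemma comb_exists_walk_tooth (a : α) (k : Fin (n + 1)) :
    ∃ p : (comb G n).Walk (a, k) (a, 0), p.length = k := by
  induction k using Fin.induction with
  | zero => exact ⟨Walk.nil, rfl⟩
  | succ k ih =>
    obtain ⟨p, hp⟩ := ih
    have h : (comb G n).Adj (a, k.succ) (a, k.castSucc) :=
      Or.inr ⟨rfl, pathGraph_adj.mpr (by simp)⟩
    exact ⟨p.cons h, by simp [hp]⟩

lemma comb_dist_tooth_le (a : α) (k : Fin (n + 1)) : (comb G n).dist (a, k) (a, 0) ≤ k := by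
  obtain ⟨p, hp⟩ := comb_exists_walk_tooth (G := G) a k
  exact hp ▸ dist_le p

lemma comb_connected (hG : G.Connected) : (comb G n).Connected := by
  obtain ⟨a⟩ := hG.nonempty
  refine (connected_iff_exists_forall_reachable _).mpr ⟨(a, 0), fun w ↦ ?_⟩
  obtain ⟨p, -⟩ := comb_exists_walk_tooth (G := G) w.1 w.2
  exact ((hG.preconnected a w.1).map combBase).trans ⟨p.reverse⟩

lemma comb_dist_base (hG : G.Connected) (a b : α) :
    (comb G n).dist (a, 0) (b, 0) = G.dist a b := by
  refine le_antisymm ((hG.preconnected a b).dist_map_le combBase) ?_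
  have := ((comb_connected (n := n) hG).preconnected (a, 0) (b, 0)).le_add_dist
    (f := fun z ↦ G.dist a z.1) ?_
  · simpa using this
  rintro x y (⟨-, -, h⟩ | ⟨h, -⟩)
  · have := h.diff_dist_adj (u := a)
    omega
  · simp [h]

lemma comb_dist_le (hG : G.Connected) (a b : α) (i j : Fin (n + 1)) :
    (comb G n).dist (a, i) (b, j) ≤ i + G.dist a b + j := by
  have hconn := comb_connected (n := n) hG
  have h₁ := hconn.dist_triangle (u := (a, i)) (v := (a, 0)) (w := (b, j))
  have h₂ := hconn.dist_triangle (u := (a, 0)) (v := (b, 0)) (w := (b, j))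
  have h₃ := comb_dist_tooth_le (G := G) a i
  have h₄ := comb_dist_tooth_le (G := G) b j
  rw [comb_dist_base hG, dist_comm (u := (b, 0))] at h₂
  omega

lemma comb_dist_of_ne (hG : G.Connected) {a b : α} (hab : a ≠ b) (i j : Fin (n + 1)) :
    (comb G n).dist (a, i) (b, j) = i + G.dist a b + j := by
  classical
  refine le_antisymm (comb_dist_le hG a b i j) ?_
  -- `f` grows by at most `1` along every edge: the only edges leaving the tooth at `a` start at
  -- `(a, 0)`, where `f = i`.
  have := ((comb_connected hG).preconnected (a, i) (b, j)).le_add_dist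
    (f := fun z ↦ if z.1 = a then i - z.2 else i + G.dist a z.1 + z.2) ?_
  · simpa [hab.symm] using this
  rintro ⟨x, k⟩ ⟨y, l⟩ (⟨rfl, rfl, h⟩ | ⟨rfl, h⟩) <;> dsimp only at h ⊢
  · have := h.diff_dist_adj (u := a)
    by_cases hx : x = a <;> by_cases hy : y = a
    · exact absurd (hx.trans hy.symm) h.ne
    · subst hx
      simp [hy, dist_eq_one_iff_adj.mpr h]
    · simp [hx, hy]
      omega
    · simp [hx, hy]
      omega
  · rw [pathGraph_adj] at h
    split_ifs <;> omega

lemma comb_isBridge_tooth (a : α) {k l : Fin (n + 1)} (hkl : (k : ℕ) + 1 = l) :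
    (comb G n).IsBridge s((a, k), (a, l)) := by
  refine isBridge_of_forall_adj_iff (fun z ↦ z.1 = a → (z.2 : ℕ) ≤ k) ?_ (fun _ ↦ le_rfl)
    (by simp; omega)
  rintro ⟨x, i⟩ ⟨y, j⟩ (⟨rfl, rfl, -⟩ | ⟨rfl, h⟩) hne
  · simp
  · dsimp only at h hne ⊢
    by_cases hx : x = a
    · subst hx
      have hik : ¬((i : ℕ) = k ∧ (j : ℕ) = l) := fun ⟨hi, hj⟩ ↦
        hne (by rw [Fin.ext hi, Fin.ext hj])
      have hil : ¬((i : ℕ) = l ∧ (j : ℕ) = k) := fun ⟨hi, hj⟩ ↦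
        hne (by rw [Fin.ext hi, Fin.ext hj, Sym2.eq_swap])
      rw [pathGraph_adj] at h
      simp only [true_implies]
      omega
    · simp [hx]

lemma comb_isBridge_base (hG : G.IsAcyclic) {a b : α} (h : G.Adj a b) :
    (comb G n).IsBridge s((a, 0), (b, 0)) := by
  refine isBridge_of_forall_adj_iff (fun z ↦ (G.deleteEdges {s(a, b)}).Reachable a z.1) ?_
    (Reachable.refl _) (isBridge_iff.mp (isAcyclic_iff_forall_adj_isBridge.mp hG h))
  rintro ⟨x, i⟩ ⟨y, j⟩ (⟨rfl, rfl, hxy⟩ | ⟨rfl, -⟩) hne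
  · have hxy' : (G.deleteEdges {s(a, b)}).Adj x y := by
      refine deleteEdges_adj.mpr ⟨hxy, fun h ↦ hne ?_⟩
      simpa using congrArg (Sym2.map fun c ↦ (c, (0 : Fin (n + 1)))) (Set.mem_singleton_iff.mp h)
    exact ⟨fun h ↦ h.trans hxy'.reachable, fun h ↦ h.trans hxy'.symm.reachable⟩
  · rfl

lemma comb_isAcyclic (hG : G.IsAcyclic) : (comb G n).IsAcyclic := by
  refine isAcyclic_iff_forall_adj_isBridge.mpr ?_
  rintro ⟨x, i⟩ ⟨y, j⟩ (⟨rfl, rfl, h⟩ | ⟨rfl, h⟩)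
  · exact comb_isBridge_base hG h
  · rcases pathGraph_adj.mp h with h | h
    · exact comb_isBridge_tooth x h
    · rw [Sym2.eq_swap]
      exact comb_isBridge_tooth x h

lemma comb_isTree (hG : G.IsTree) : (comb G n).IsTree :=
  ⟨comb_connected hG.connected, comb_isAcyclic hG.isAcyclic⟩

lemma comb_dist_le_add_iff (hG : G.Connected) (hn : ∀ a b, G.dist a b ≤ n) (a b : α)
    {r s : ℕ} {i j : Fin (n + 1)} (hi : (i : ℕ) = n - r) (hj : (j : ℕ) = n - s) :
    (comb G n).dist (a, i) (b, j) ≤ n + n ↔ G.dist a b ≤ r + s := by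
  have hab := hn a b
  by_cases h : a = b
  · subst h
    have := comb_dist_le hG a a i j
    simp only [dist_self, zero_le, iff_true] at this ⊢
    omega
  · rw [comb_dist_of_ne hG h]
    omega

end SimpleGraph

open SimpleGraph

theorem stmt_11_general {W V : Type*} [Fintype W]
    (T : SimpleGraph W) (hT : T.IsTree) (c : V → W) (r : V → ℕ) :
    ∃ (W' : Type) (_ : Fintype W') (T' : SimpleGraph W') (φ : W → W')
      (c' : V → W') (R : ℕ),
      T'.IsTree ∧ Function.Injective φ ∧
      (∀ a b : W, T'.dist (φ a) (φ b) = T.dist a b) ∧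
      ∀ u v : V, u ≠ v →
        ((graphBall T' (c' u) R ∩ graphBall T' (c' v) R).Nonempty ↔
          (graphBall T (c u) (r u) ∩ graphBall T (c v) (r v)).Nonempty) := by
  let e := Fintype.equivFin W
  let G := T.map e.toEmbedding
  have hG : G.IsTree := (Iso.map e T).isTree_iff.mp hT
  have hGdist : ∀ a b, G.dist (e a) (e b) = T.dist a b := (Iso.map e T).dist_eq
  have : Nonempty W := hT.connected.nonempty
  have hdiam : ∀ a b, G.dist a b ≤ T.diam := fun a b ↦ by
    rw [← e.apply_symm_apply a, ← e.apply_symm_apply b, hGdist]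
    exact dist_le_diam (connected_iff_ediam_ne_top.mp hT.connected)
  refine ⟨_, inferInstance, comb G T.diam, fun a ↦ (e a, 0),
    fun v ↦ (e (c v), ⟨T.diam - r v, by omega⟩), T.diam, comb_isTree hG,
    fun a b h ↦ e.injective (congrArg Prod.fst h),
    fun a b ↦ (comb_dist_base hG.connected _ _).trans (hGdist a b), fun u v _ ↦ ?_⟩
  rw [(comb_isTree hG).connected.graphBall_inter_nonempty_iff,
    hT.connected.graphBall_inter_nonempty_iff, ← hGdist]
  exact comb_dist_le_add_iff hG.connected hdiam _ _ rfl rfl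

theorem stmt_11 {W V : Type*} [Fintype W] [Fintype V]
    (T : SimpleGraph W) (hT : T.IsTree) (c : V → W) (r : V → ℕ) :
    ∃ (W' : Type) (_ : Fintype W') (T' : SimpleGraph W') (φ : W → W')
      (c' : V → W') (R : ℕ),
      T'.IsTree ∧ Function.Injective φ ∧
      (∀ a b : W, T'.dist (φ a) (φ b) = T.dist a b) ∧
      ∀ u v : V, u ≠ v →
        ((graphBall T' (c' u) R ∩ graphBall T' (c' v) R).Nonempty ↔
          (graphBall T (c u) (r u) ∩ graphBall T (c v) (r v)).Nonempty) :=
  stmt_11_general T hT c r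
end
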